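/- arXiv:1604.08775 — 2 statements merged into one kernel-verified Lean document; each statement's English description precedes it below -/
import Mathlib

section
/- If G is a k-gate, then G admits a Helly EPT representation on a host tree of maximum degree k; moreover, the host tree can be taken to be a star with k leaves. -/
/-!
Every vertex of a gate lies in exactly two maximal cliques and two vertices are adjacent iff they
share one, so a gate is the line graph of the multigraph whose nodes are its maximal cliques and
whose edges are its vertices; moreover this multigraph has no triangle. All of this holds for
chordless cycles and survives attaching a path, which adds a path between the two chosen cliques
to the multigraph.

On a star with one leaf per maximal clique, the two-edge paths joining the leaves of the two
cliques of each vertex then form an EPT representation. It is Helly because a family of pairwise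
intersecting pairs containing no triangle has a common element.
-/

/-- A maximal clique (a maximal complete vertex set) of a simple graph. -/
def IsMaxClique {V : Type} (G : SimpleGraph V) (s : Set V) : Prop :=
  G.IsClique s ∧ ∀ t : Set V, G.IsClique t → s ⊆ t → s = t

/-- The number of maximal cliques of a graph. -/
noncomputable def numMaxCliques {V : Type} (G : SimpleGraph V) : ℕ :=
  {s : Set V | IsMaxClique G s}.ncard

/-- The graph obtained from `G` and a chordless path on `l` new vertices by joining the
first vertex of the path to every vertex of `A` and the last vertex to every vertex of `B`. -/
def joinPath {V : Type} (G : SimpleGraph V) (A B : Set V) (l : ℕ) :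
    SimpleGraph (V ⊕ Fin l) where
  Adj x y :=
    match x, y with
    | Sum.inl a, Sum.inl b => G.Adj a b
    | Sum.inl a, Sum.inr i => (i.val = 0 ∧ a ∈ A) ∨ (i.val = l - 1 ∧ a ∈ B)
    | Sum.inr i, Sum.inl a => (i.val = 0 ∧ a ∈ A) ∨ (i.val = l - 1 ∧ a ∈ B)
    | Sum.inr i, Sum.inr j => i.val + 1 = j.val ∨ j.val + 1 = i.val
  symm := ⟨by
    rintro (a | i) (b | j) h <;> simp_all <;> tauto⟩
  loopless := ⟨by
    rintro (a | i) h
    · exact G.irrefl h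
    · rcases h with h | h <;> omega⟩

/-- Gates, defined recursively (up to isomorphism): chordless cycles `Cₙ`, `n ≥ 4`, are
gates, and joining a new chordless path to two disjoint maximal cliques of a gate
yields a gate. -/
inductive IsGate : {V : Type} → SimpleGraph V → Prop
  | cycle (n : ℕ) (hn : 4 ≤ n) : IsGate (SimpleGraph.cycleGraph n)
  | extend {V : Type} (G : SimpleGraph V) (C C' : Set V) (l : ℕ)
      (hG : IsGate G) (hC : IsMaxClique G C) (hC' : IsMaxClique G C')
      (hdisj : Disjoint C C') (hl : 2 ≤ l) : IsGate (joinPath G C C' l)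
  | iso {V W : Type} (G : SimpleGraph V) (H : SimpleGraph W)
      (hG : IsGate G) (e : G ≃g H) : IsGate H

/-- An EPT representation of `G`: a family of paths in a host tree such that two distinct
vertices are adjacent iff their paths share an edge of the tree. -/
structure EPTRep {V : Type} (G : SimpleGraph V) where
  VT : Type
  T : SimpleGraph VT
  tree : T.IsTree
  src : V → VT
  tgt : V → VT
  walk : (v : V) → T.Walk (src v) (tgt v)
  isPath : ∀ v, (walk v).IsPath
  adj_iff : ∀ v w : V, v ≠ w →
    (G.Adj v w ↔ ∃ e : Sym2 VT, e ∈ (walk v).edges ∧ e ∈ (walk w).edges)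

/-- The edge set of the path representing `v`. -/
def EPTRep.edges {V : Type} {G : SimpleGraph V} (R : EPTRep G) (v : V) :
    Set (Sym2 R.VT) := {e | e ∈ (R.walk v).edges}

/-- The representation is Helly: every nonempty pairwise edge-intersecting subfamily of
paths has a common edge. -/
def EPTRep.Helly {V : Type} {G : SimpleGraph V} (R : EPTRep G) : Prop :=
  ∀ S : Set V, S.Nonempty →
    (∀ u ∈ S, ∀ v ∈ S, (R.edges u ∩ R.edges v).Nonempty) →
    (⋂ v ∈ S, R.edges v).Nonempty

/-- The host tree has maximum degree at most `h`. -/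
def EPTRep.maxDegLE {V : Type} {G : SimpleGraph V} (R : EPTRep G) (h : ℕ) : Prop :=
  ∀ x : R.VT, (R.T.neighborSet x).ncard ≤ h

/-- The class `[h,2,2]`. -/
def InEPTClass (h : ℕ) {V : Type} (G : SimpleGraph V) : Prop :=
  ∃ R : EPTRep G, R.maxDegLE h

/-- Helly EPT graphs. -/
def IsHellyEPT {V : Type} (G : SimpleGraph V) : Prop :=
  ∃ R : EPTRep G, R.Helly

/-- The class Helly `[h,2,2]`. -/
def InHellyClass (h : ℕ) {V : Type} (G : SimpleGraph V) : Prop :=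
  ∃ R : EPTRep G, R.Helly ∧ R.maxDegLE h

/-- Three paths of the representation form a claw at some claw of the host tree. -/
def EPTRep.FormsClaw {V : Type} {G : SimpleGraph V} (R : EPTRep G) (a b c : V) : Prop :=
  ∃ q x y z : R.VT, R.T.Adj q x ∧ R.T.Adj q y ∧ R.T.Adj q z ∧
    x ≠ y ∧ y ≠ z ∧ x ≠ z ∧
    s(q, x) ∈ R.edges a ∧ s(q, y) ∈ R.edges a ∧
    s(q, y) ∈ R.edges b ∧ s(q, z) ∈ R.edges b ∧
    s(q, x) ∈ R.edges c ∧ s(q, z) ∈ R.edges c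

/-- A multipie of size `k` whose paths are those representing the vertices in `S`. -/
def IsMultipie {V : Type} {G : SimpleGraph V} (R : EPTRep G) (k : ℕ) (S : Set V) : Prop :=
  ∃ (q : R.VT) (qi : Fin k → R.VT), Function.Injective qi ∧
    (∀ i, R.T.Adj q (qi i)) ∧
    (∀ v ∈ S, {i : Fin k | qi i ∈ (R.walk v).support}.ncard = 2) ∧
    (∀ u ∈ S, ∀ v ∈ S, ∀ i j : Fin k, i ≠ j →
      qi i ∈ (R.walk u).support → qi j ∈ (R.walk u).support →
      qi i ∈ (R.walk v).support → qi j ∈ (R.walk v).support → u = v) ∧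
    (∀ i, 2 ≤ {v ∈ S | s(q, qi i) ∈ R.edges v}.ncard) ∧
    (∀ a ∈ S, ∀ b ∈ S, ∀ c ∈ S, ¬ R.FormsClaw a b c)

/-- The next index around a cycle. -/
def finNext {k : ℕ} (hk : 0 < k) (i : Fin k) : Fin k :=
  ⟨(i.val + 1) % k, Nat.mod_lt _ hk⟩

/-- `G` has a clique separator: a complete vertex set whose removal disconnects the graph. -/
def HasCliqueSep {V : Type} (G : SimpleGraph V) : Prop :=
  ∃ C : Set V, G.IsClique C ∧ ¬ (G.induce Cᶜ).Preconnected

/-- An atom of `G`: a maximal vertex subset inducing a connected subgraph without clique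
separators. -/
def IsAtomOf {V : Type} (G : SimpleGraph V) (A : Set V) : Prop :=
  (G.induce A).Connected ∧ ¬ HasCliqueSep (G.induce A) ∧
    ∀ B : Set V, A ⊆ B → (G.induce B).Connected → ¬ HasCliqueSep (G.induce B) → A = B

open SimpleGraph

section TripleHelly

variable {α β ι : Type*}

def TripleHelly (S : α → Set ι) : Prop :=
  ∀ u v w, (S u ∩ S v).Nonempty → (S v ∩ S w).Nonempty → (S u ∩ S w).Nonempty →
    (S u ∩ S v ∩ S w).Nonempty

theorem TripleHelly.comp {S : α → Set ι} (hS : TripleHelly S) (f : β → α) :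
    TripleHelly (S ∘ f) :=
  fun u v w => hS (f u) (f v) (f w)

theorem TripleHelly.image {S : α → Set ι} (hS : TripleHelly S) {κ : Type*} {e : ι → κ}
    {s : Set ι} (he : Set.InjOn e s) (hSs : ∀ v, S v ⊆ s) :
    TripleHelly fun v => e '' S v := by
  intro u v w huv hvw huw
  rw [← he.image_inter (hSs u) (hSs v), Set.image_nonempty] at huv
  rw [← he.image_inter (hSs v) (hSs w), Set.image_nonempty] at hvw
  rw [← he.image_inter (hSs u) (hSs w), Set.image_nonempty] at huw
  obtain ⟨x, ⟨hxu, hxv⟩, hxw⟩ := hS u v w huv hvw huw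
  exact ⟨e x, ⟨⟨x, hxu, rfl⟩, ⟨x, hxv, rfl⟩⟩, ⟨x, hxw, rfl⟩⟩

theorem tripleHelly_pair_succ : TripleHelly fun j : ℕ => ({j, j + 1} : Set ℕ) := by
  intro u v w
  simp only [Set.inter_nonempty, Set.mem_inter_iff, Set.mem_insert_iff,
    Set.mem_singleton_iff]
  rintro ⟨x, hx⟩ ⟨y, hy⟩ ⟨z, hz⟩
  exact ⟨max u (max v w), by omega⟩

theorem inter_nonempty_of_subsingleton {s t r A : Set ι} (hsr : (s ∩ r).Nonempty)
    (htr : (t ∩ r).Nonempty) (hsA : s ∩ r ⊆ A) (htA : t ∩ r ⊆ A)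
    (hrA : (r ∩ A).Subsingleton) : (s ∩ t ∩ r).Nonempty := by
  obtain ⟨x, hxs, hxr⟩ := hsr
  obtain ⟨y, hyt, hyr⟩ := htr
  obtain rfl : x = y := hrA ⟨hxr, hsA ⟨hxs, hxr⟩⟩ ⟨hyr, htA ⟨hyt, hyr⟩⟩
  exact ⟨x, ⟨hxs, hyt⟩, hxr⟩

theorem TripleHelly.sum_elim {S : α → Set ι} {T : β → Set ι} (hS : TripleHelly S)
    (hT : TripleHelly T) {A : Set ι} (hST : ∀ a b, S a ∩ T b ⊆ A)
    (hSA : ∀ a, (S a ∩ A).Subsingleton) (hTA : ∀ b, (T b ∩ A).Subsingleton) :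
    TripleHelly (Sum.elim S T) := by
  have hTS : ∀ a b, T b ∩ S a ⊆ A := fun a b => (Set.inter_comm _ _).subset.trans (hST a b)
  rintro (u | u) (v | v) (w | w) huv hvw huw <;>
    simp only [Sum.elim_inl, Sum.elim_inr] at huv hvw huw ⊢
  · exact hS u v w huv hvw huw
  · exact inter_nonempty_of_subsingleton huw hvw (hST _ _) (hST _ _) (hTA w)
  · rw [Set.inter_right_comm]
    exact inter_nonempty_of_subsingleton huv (by rwa [Set.inter_comm]) (hST _ _) (hST _ _) (hTA v)
  · rw [Set.inter_assoc, Set.inter_comm]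
    exact inter_nonempty_of_subsingleton (by rwa [Set.inter_comm]) (by rwa [Set.inter_comm])
      (hTS _ _) (hTS _ _) (hSA u)
  · rw [Set.inter_assoc, Set.inter_comm]
    exact inter_nonempty_of_subsingleton (by rwa [Set.inter_comm]) (by rwa [Set.inter_comm])
      (hST _ _) (hST _ _) (hTA u)
  · rw [Set.inter_right_comm]
    exact inter_nonempty_of_subsingleton huv (by rwa [Set.inter_comm]) (hTS _ _) (hTS _ _) (hSA v)
  · exact inter_nonempty_of_subsingleton huw hvw (hTS _ _) (hTS _ _) (hSA w)
  · exact hT u v w huv hvw huw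

theorem TripleHelly.exists_mem_of_pairwise {S : α → Set ι} (hS : TripleHelly S)
    (h2 : ∀ v, (S v).ncard = 2) {U : Set α} (hU : U.Nonempty)
    (hmeet : ∀ u ∈ U, ∀ v ∈ U, (S u ∩ S v).Nonempty) : ∃ i, ∀ v ∈ U, i ∈ S v := by
  obtain ⟨u, hu⟩ := hU
  obtain ⟨x, y, -, hxy⟩ := Set.ncard_eq_two.mp (h2 u)
  by_cases hx : ∀ v ∈ U, x ∈ S v
  · exact ⟨x, hx⟩
  push Not at hx
  obtain ⟨v, hv, hxv⟩ := hx
  refine ⟨y, fun w hw => ?_⟩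
  obtain ⟨t, ⟨htu, htv⟩, htw⟩ :=
    hS u v w (hmeet u hu v hv) (hmeet v hv w hw) (hmeet u hu w hw)
  rw [hxy] at htu
  obtain rfl | rfl := htu
  · exact absurd htv hxv
  · exact htw

theorem tripleHelly_of_cliqueFree {V : Type*} {G : SimpleGraph V} {S : V → Set ι}
    (hadj : ∀ v w, v ≠ w → (G.Adj v w ↔ (S v ∩ S w).Nonempty)) (hG : G.CliqueFree 3) :
    TripleHelly S := by
  classical
  intro u v w huv hvw huw
  by_cases h₁ : u = v
  · subst h₁; rwa [Set.inter_self]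
  by_cases h₂ : v = w
  · subst h₂; rwa [Set.inter_assoc, Set.inter_self]
  by_cases h₃ : u = w
  · subst h₃; rwa [Set.inter_right_comm, Set.inter_self]
  exact absurd (is3Clique_triple_iff.mpr ⟨(hadj _ _ h₁).mpr huv, (hadj _ _ h₃).mpr huw,
    (hadj _ _ h₂).mpr hvw⟩) (hG _)

end TripleHelly

/-- `label v` is the pair of maximal cliques containing `v`: the graph is the line graph of the
multigraph on `ι` with an edge `label v` for each vertex `v`. `tripleHelly` says that this
multigraph has no triangle, and `exists_label_ne` makes the stars `star i` the maximal cliques. -/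
structure CliqueLabelling {V : Type} (G : SimpleGraph V) (ι : Type) where
  label : V → Set ι
  ncard_label : ∀ v, (label v).ncard = 2
  adj_iff : ∀ {v w}, v ≠ w → (G.Adj v w ↔ (label v ∩ label w).Nonempty)
  tripleHelly : TripleHelly label
  exists_label_ne : ∀ i, ∃ v w, i ∈ label v ∧ i ∈ label w ∧ label v ≠ label w

namespace CliqueLabelling

variable {V ι : Type} {G : SimpleGraph V} (L : CliqueLabelling G ι)

def star (i : ι) : Set V := {v | i ∈ L.label v}

theorem star_nonempty (i : ι) : (L.star i).Nonempty :=
  let ⟨v, _, hv, _⟩ := L.exists_label_ne i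
  ⟨v, hv⟩

theorem isClique_star (i : ι) : G.IsClique (L.star i) :=
  fun _ hv _ hw hvw => (L.adj_iff hvw).mpr ⟨i, hv, hw⟩

theorem exists_subset_star [Nonempty ι] {s : Set V} (hs : G.IsClique s) :
    ∃ i, s ⊆ L.star i := by
  rcases s.eq_empty_or_nonempty with rfl | hne
  · exact ⟨Classical.arbitrary ι, Set.empty_subset _⟩
  have hmeet : ∀ u ∈ s, ∀ v ∈ s, (L.label u ∩ L.label v).Nonempty := by
    intro u hu v hv
    rcases eq_or_ne u v with rfl | huv
    · rw [Set.inter_self]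
      exact Set.nonempty_of_ncard_ne_zero (by rw [L.ncard_label]; exact two_ne_zero)
    · exact (L.adj_iff huv).mp (hs hu hv huv)
  exact L.tripleHelly.exists_mem_of_pairwise L.ncard_label hne hmeet

theorem label_eq_pair_of_mem {v : V} {i j : ι} (hij : i ≠ j) (hi : i ∈ L.label v)
    (hj : j ∈ L.label v) : L.label v = {i, j} := by
  refine (Set.eq_of_subset_of_ncard_le (Set.insert_subset hi (Set.singleton_subset_iff.mpr hj))
    ?_ (Set.finite_of_ncard_ne_zero ?_)).symm <;> rw [L.ncard_label]
  · exact (Set.ncard_pair hij).ge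
  · exact two_ne_zero

theorem eq_of_star_subset {i j : ι} (h : L.star i ⊆ L.star j) : i = j := by
  by_contra hij
  obtain ⟨v, w, hv, hw, hvw⟩ := L.exists_label_ne i
  exact hvw ((L.label_eq_pair_of_mem hij hv (h hv)).trans
    (L.label_eq_pair_of_mem hij hw (h hw)).symm)

theorem isMaxClique_iff [Nonempty ι] {s : Set V} : IsMaxClique G s ↔ ∃ i, L.star i = s := by
  constructor
  · rintro ⟨hs, hmax⟩
    obtain ⟨i, hi⟩ := L.exists_subset_star hs
    exact ⟨i, (hmax _ (L.isClique_star i) hi).symm⟩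
  · rintro ⟨i, rfl⟩
    refine ⟨L.isClique_star i, fun t ht hit => ?_⟩
    obtain ⟨j, hj⟩ := L.exists_subset_star ht
    obtain rfl := L.eq_of_star_subset (hit.trans hj)
    exact hit.antisymm hj

theorem numMaxCliques_eq [Nonempty ι] (L : CliqueLabelling G ι) :
    numMaxCliques G = Nat.card ι := by
  have hrange : {s : Set V | IsMaxClique G s} = Set.range L.star := by
    ext s
    exact L.isMaxClique_iff
  rw [numMaxCliques, hrange, ← Nat.card_coe_set_eq,
    Nat.card_range_of_injective fun i j h => L.eq_of_star_subset h.le]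

end CliqueLabelling

section StarRep

variable {ι : Type}

def spoke (i : ι) : Sym2 (Option ι) := s(none, some i)

theorem spoke_injective : Function.Injective (spoke (ι := ι)) :=
  fun _ _ h => Option.some_injective _ (Sym2.congr_right.mp h)

def starWalk (a b : ι) : (starGraph (none : Option ι)).Walk (some a) (some b) :=
  .cons (starGraph_center_adj' (Option.some_ne_none a).symm)
    (.cons (starGraph_center_adj (Option.some_ne_none b).symm) .nil)

theorem starWalk_isPath {a b : ι} (h : a ≠ b) : (starWalk a b).IsPath := by
  simp [starWalk, Walk.isPath_def, h]

theorem setOf_mem_starWalk_edges (a b : ι) :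
    {e | e ∈ (starWalk a b).edges} = spoke '' {a, b} := by
  ext e
  simp [starWalk, spoke, Sym2.eq_swap, eq_comm]

theorem starWalk_edges_meet_iff {a b c d : ι} :
    (∃ e, e ∈ (starWalk a b).edges ∧ e ∈ (starWalk c d).edges) ↔
      (({a, b} : Set ι) ∩ {c, d}).Nonempty := by
  rw [← Set.image_nonempty (f := spoke), Set.image_inter spoke_injective,
    ← setOf_mem_starWalk_edges, ← setOf_mem_starWalk_edges]
  rfl

theorem ncard_compl_singleton_option [Finite ι] (x : Option ι) :
    ({x}ᶜ : Set (Option ι)).ncard = Nat.card ι := by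
  rw [Set.ncard_compl, Set.ncard_singleton, Finite.card_option, Nat.add_sub_cancel]

end StarRep

namespace CliqueLabelling

variable {V ι : Type} {G : SimpleGraph V} (L : CliqueLabelling G ι)

noncomputable def fst (v : V) : ι := (Set.ncard_eq_two.mp (L.ncard_label v)).choose

noncomputable def snd (v : V) : ι := (Set.ncard_eq_two.mp (L.ncard_label v)).choose_spec.choose

theorem fst_ne_snd (v : V) : L.fst v ≠ L.snd v :=
  (Set.ncard_eq_two.mp (L.ncard_label v)).choose_spec.choose_spec.1

theorem label_eq (v : V) : L.label v = {L.fst v, L.snd v} :=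
  (Set.ncard_eq_two.mp (L.ncard_label v)).choose_spec.choose_spec.2

noncomputable def starRep : EPTRep G where
  VT := Option ι
  T := starGraph none
  tree := isTree_starGraph none
  src v := some (L.fst v)
  tgt v := some (L.snd v)
  walk v := starWalk (L.fst v) (L.snd v)
  isPath v := starWalk_isPath (L.fst_ne_snd v)
  adj_iff v w hvw := by rw [L.adj_iff hvw, L.label_eq, L.label_eq, starWalk_edges_meet_iff]

theorem starRep_edges (v : V) : L.starRep.edges v = spoke '' L.label v := by
  rw [L.label_eq]
  exact setOf_mem_starWalk_edges _ _

theorem starRep_helly : L.starRep.Helly := by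
  intro S hS hmeet
  have hlabel : ∀ u ∈ S, ∀ v ∈ S, (L.label u ∩ L.label v).Nonempty := by
    intro u hu v hv
    obtain ⟨e, heu, hev⟩ := hmeet u hu v hv
    rw [starRep_edges] at heu hev
    obtain ⟨i, hiu, rfl⟩ := heu
    obtain ⟨j, hjv, hji⟩ := hev
    exact ⟨i, hiu, spoke_injective hji ▸ hjv⟩
  obtain ⟨i, hi⟩ := L.tripleHelly.exists_mem_of_pairwise L.ncard_label hS hlabel
  refine ⟨spoke i, Set.mem_iInter₂.mpr fun v hv => ?_⟩
  rw [starRep_edges]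
  exact Set.mem_image_of_mem _ (hi v hv)

theorem starRep_maxDegLE [Finite ι] : L.starRep.maxDegLE (Nat.card ι) := fun (x : Option ι) =>
  (Set.ncard_le_ncard (neighborSet_subset_compl _ x) (Set.toFinite _)).trans
    (ncard_compl_singleton_option x).le

end CliqueLabelling

section Cycle

variable (m : ℕ)

/-- Around a triangle the three steps `±1` would add up to `0`, forcing `1 = 0` or `3 = 0`. -/
theorem cycleGraph_cliqueFree_three : (cycleGraph (m + 4)).CliqueFree 3 := by
  classical
  have h1 : (1 : Fin (m + 4)) ≠ 0 := one_ne_zero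
  have h3 : (3 : Fin (m + 4)) ≠ 0 := by
    simp [Fin.ext_iff, Nat.mod_eq_of_lt (show 3 < m + 4 by omega)]
  intro t ht
  obtain ⟨u, v, w, huv, huw, hvw, -⟩ := is3Clique_iff.mp ht
  rw [cycleGraph_adj] at huv huw hvw
  grind

variable {m}

theorem cycleGraph_adj_iff_inter_nonempty {u v : Fin (m + 4)} (h : u ≠ v) :
    (cycleGraph (m + 4)).Adj u v ↔
      (({u, u + 1} : Set (Fin (m + 4))) ∩ {v, v + 1}).Nonempty := by
  rw [cycleGraph_adj, sub_eq_iff_eq_add, sub_eq_iff_eq_add]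
  constructor
  · rintro (h | h)
    · exact ⟨u, by simp, by simp [h, add_comm]⟩
    · exact ⟨v, by simp [h, add_comm], by simp⟩
  · rintro ⟨x, hxu, hxv⟩
    simp only [Set.mem_insert_iff, Set.mem_singleton_iff] at hxu hxv
    grind

theorem pair_sub_one_ne_pair (i : Fin (m + 4)) :
    ({i - 1, i - 1 + 1} : Set (Fin (m + 4))) ≠ {i, i + 1} := by
  intro h
  have hmem : i - 1 ∈ ({i, i + 1} : Set (Fin (m + 4))) := h ▸ Set.mem_insert _ _
  rcases hmem with h' | h'
  · exact one_ne_zero (sub_eq_self.mp h')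
  · rw [Set.mem_singleton_iff, sub_eq_iff_eq_add, add_assoc, left_eq_add] at h'
    simp [Fin.ext_iff, Fin.val_add, Nat.mod_eq_of_lt (show 2 < m + 4 by omega)] at h'

/-- Vertex `u` of the cycle lies in the cliques `{u - 1, u}` and `{u, u + 1}`, indexed by `u`
and `u + 1`. -/
def cycleLabelling : CliqueLabelling (cycleGraph (m + 4)) (Fin (m + 4)) where
  label u := {u, u + 1}
  ncard_label u := Set.ncard_pair (by simp)
  adj_iff := cycleGraph_adj_iff_inter_nonempty
  tripleHelly := tripleHelly_of_cliqueFree (fun _ _ => cycleGraph_adj_iff_inter_nonempty)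
    (cycleGraph_cliqueFree_three m)
  exists_label_ne i := ⟨i - 1, i, by simp, by simp, pair_sub_one_ne_pair i⟩

end Cycle

section PathIndex

variable {ι : Type} {a b : ι} {l : ℕ}

/-- The cliques met in turn along the path attached by `joinPath`: `a`, then the `l - 1` new
edges of the path, then `b`. Path vertex `j` lies in cliques `pathIndex j` and
`pathIndex (j + 1)`. -/
def pathIndex (a b : ι) (l : ℕ) : ℕ → ι ⊕ Fin (l - 1)
  | 0 => .inl a
  | t + 1 => if h : t < l - 1 then .inr ⟨t, h⟩ else .inl b

theorem pathIndex_succ {t : ℕ} (h : t < l - 1) : pathIndex a b l (t + 1) = .inr ⟨t, h⟩ :=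
  dif_pos h

theorem pathIndex_self (hl : 1 ≤ l) : pathIndex a b l l = .inl b := by
  obtain ⟨t, rfl⟩ : ∃ t, l = t + 1 := ⟨l - 1, by omega⟩
  exact dif_neg (by omega)

theorem eq_zero_or_eq_of_pathIndex_eq_inl {t : ℕ} {c : ι} (ht : t ≤ l)
    (h : pathIndex a b l t = .inl c) : t = 0 ∨ t = l := by
  rcases t with _ | t
  · exact Or.inl rfl
  · by_contra hne
    rw [pathIndex_succ (by omega)] at h
    exact Sum.inr_ne_inl h

theorem pathIndex_injOn (hab : a ≠ b) : Set.InjOn (pathIndex a b l) (Set.Iic l) := by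
  have key : ∀ {s t : ℕ}, s ≤ l → t ≤ l →
      pathIndex a b l s = pathIndex a b l t → s ≤ t := by
    intro s t hs ht h
    by_contra! hts
    obtain ⟨s, rfl⟩ : ∃ s', s = s' + 1 := ⟨s - 1, by omega⟩
    by_cases hsl : s < l - 1
    · rw [pathIndex_succ hsl] at h
      rcases t with _ | t
      · exact Sum.inr_ne_inl h
      · rw [pathIndex_succ (by omega)] at h
        exact absurd (Fin.mk.inj_iff.mp (Sum.inr_injective h)) (by omega)
    · obtain rfl : s + 1 = l := by omega
      rw [pathIndex_self (by omega)] at h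
      obtain rfl | rfl := eq_zero_or_eq_of_pathIndex_eq_inl ht h.symm
      · exact hab (Sum.inl_injective h).symm
      · omega
  exact fun s hs t ht h => le_antisymm (key hs ht h) (key ht hs h.symm)

theorem pair_succ_inter_nonempty_iff {i j : ℕ} (h : i ≠ j) :
    (({i, i + 1} : Set ℕ) ∩ {j, j + 1}).Nonempty ↔ i + 1 = j ∨ j + 1 = i := by
  constructor
  · rintro ⟨x, hxi, hxj⟩
    simp only [Set.mem_insert_iff, Set.mem_singleton_iff] at hxi hxj
    omega
  · rintro (rfl | rfl)
    · exact ⟨i + 1, by simp, by simp⟩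
    · exact ⟨j + 1, by simp, by simp⟩

end PathIndex

namespace CliqueLabelling

variable {V ι : Type} {G : SimpleGraph V} (L : CliqueLabelling G ι) {a b : ι} {l : ℕ}

theorem ne_of_disjoint_star (hab : Disjoint (L.star a) (L.star b)) : a ≠ b := by
  rintro rfl
  exact (L.star_nonempty a).ne_empty (disjoint_self.mp hab)

def extendLabel (a b : ι) (l : ℕ) : V ⊕ Fin l → Set (ι ⊕ Fin (l - 1)) :=
  Sum.elim (fun v => Sum.inl '' L.label v) fun j => pathIndex a b l '' {j.val, j.val + 1}

theorem pair_subset_Iic (j : Fin l) : ({j.val, j.val + 1} : Set ℕ) ⊆ Set.Iic l := by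
  rintro t (rfl | rfl) <;> simp only [Set.mem_Iic] <;> omega

theorem ncard_extendLabel (hab : a ≠ b) (x : V ⊕ Fin l) :
    (L.extendLabel a b l x).ncard = 2 := by
  rcases x with v | j
  · exact (Set.ncard_image_of_injective _ Sum.inl_injective).trans (L.ncard_label v)
  · rw [extendLabel, Sum.elim_inr, ((pathIndex_injOn hab).mono (pair_subset_Iic j)).ncard_image]
    exact Set.ncard_pair (by omega)

theorem inl_image_inter_pathIndex_nonempty_iff {v : V} {j : Fin l} :
    (Sum.inl '' L.label v ∩ pathIndex a b l '' {j.val, j.val + 1}).Nonempty ↔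
      (j.val = 0 ∧ v ∈ L.star a) ∨ (j.val = l - 1 ∧ v ∈ L.star b) := by
  constructor
  · rintro ⟨_, ⟨c, hc, rfl⟩, t, ht, htc⟩
    have htl := pair_subset_Iic j ht
    simp only [Set.mem_insert_iff, Set.mem_singleton_iff] at ht
    rcases eq_zero_or_eq_of_pathIndex_eq_inl htl htc with rfl | rfl
    · obtain rfl : a = c := Sum.inl_injective htc
      exact Or.inl ⟨by omega, hc⟩
    · obtain rfl : b = c := Sum.inl_injective ((pathIndex_self (by omega)).symm.trans htc)
      exact Or.inr ⟨by omega, hc⟩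
  · rintro (⟨hj, hv⟩ | ⟨hj, hv⟩)
    · exact ⟨_, ⟨a, hv, rfl⟩, 0, Or.inl hj.symm, rfl⟩
    · refine ⟨_, ⟨b, hv, rfl⟩, l, Or.inr ?_, pathIndex_self (by omega)⟩
      rw [Set.mem_singleton_iff]
      omega

theorem extendLabel_adj_iff (hab : Disjoint (L.star a) (L.star b)) {x y : V ⊕ Fin l}
    (hxy : x ≠ y) :
    (joinPath G (L.star a) (L.star b) l).Adj x y ↔
      (L.extendLabel a b l x ∩ L.extendLabel a b l y).Nonempty := by
  rcases x with v | i <;> rcases y with w | j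
  · rw [extendLabel, Sum.elim_inl, Sum.elim_inl, ← Set.image_inter Sum.inl_injective,
      Set.image_nonempty, ← L.adj_iff (fun h => hxy (congrArg _ h))]
    rfl
  · exact L.inl_image_inter_pathIndex_nonempty_iff.symm
  · rw [SimpleGraph.adj_comm, Set.inter_comm]
    exact L.inl_image_inter_pathIndex_nonempty_iff.symm
  · have hij : i.val ≠ j.val := fun h => hxy (congrArg _ (Fin.ext h))
    rw [extendLabel, Sum.elim_inr, Sum.elim_inr,
      ← (pathIndex_injOn (L.ne_of_disjoint_star hab)).image_inter (pair_subset_Iic i)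
        (pair_subset_Iic j), Set.image_nonempty]
    exact (pair_succ_inter_nonempty_iff hij).symm

/-- An old and a new vertex can only share one of the ends `a`, `b` of the path, and no vertex
lies in both ends: a new one because `2 ≤ l`, an old one because the two cliques are disjoint. -/
theorem tripleHelly_extendLabel (hab : Disjoint (L.star a) (L.star b)) (hl : 2 ≤ l) :
    TripleHelly (L.extendLabel a b l) := by
  have hinj := pathIndex_injOn (l := l) (L.ne_of_disjoint_star hab)
  have hends : pathIndex a b l '' {0, l} = {.inl a, .inl b} := by
    rw [Set.image_pair, pathIndex_self (by omega)]
    rfl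
  refine TripleHelly.sum_elim (A := pathIndex a b l '' {0, l})
    (L.tripleHelly.image Sum.inl_injective.injOn fun _ => Set.subset_univ _)
    ((tripleHelly_pair_succ.comp Fin.val).image hinj pair_subset_Iic) ?_ ?_ ?_
  · rintro v j _ ⟨⟨c, -, rfl⟩, t, ht, htc⟩
    rcases eq_zero_or_eq_of_pathIndex_eq_inl (pair_subset_Iic j ht) htc with rfl | rfl
    · exact ⟨0, Or.inl rfl, htc⟩
    · exact ⟨_, Or.inr rfl, htc⟩
  · intro v
    rw [hends]
    rintro _ ⟨⟨x, hx, rfl⟩, hxab⟩ _ ⟨⟨y, hy, rfl⟩, hyab⟩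
    simp only [Set.mem_insert_iff, Set.mem_singleton_iff, Sum.inl.injEq] at hxab hyab
    rcases hxab with rfl | rfl <;> rcases hyab with rfl | rfl
    · rfl
    · exact absurd hy (Set.disjoint_left.mp hab hx)
    · exact absurd hx (Set.disjoint_left.mp hab hy)
    · rfl
  · intro j
    rw [← hinj.image_inter (pair_subset_Iic j) (by simp [Set.insert_subset_iff])]
    refine Set.Subsingleton.image ?_ _
    rintro x ⟨hxj, hx⟩ y ⟨hyj, hy⟩
    simp only [Set.mem_insert_iff, Set.mem_singleton_iff] at hxj hx hyj hy
    omega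

theorem exists_extendLabel_ne (hab : a ≠ b) (i : ι ⊕ Fin (l - 1)) :
    ∃ x y, i ∈ L.extendLabel a b l x ∧ i ∈ L.extendLabel a b l y ∧
      L.extendLabel a b l x ≠ L.extendLabel a b l y := by
  rcases i with c | e
  · obtain ⟨v, w, hv, hw, hvw⟩ := L.exists_label_ne c
    exact ⟨.inl v, .inl w, Set.mem_image_of_mem _ hv, Set.mem_image_of_mem _ hw,
      fun h => hvw (Set.image_injective.mpr Sum.inl_injective h)⟩
  · have he := e.isLt
    refine ⟨.inr ⟨e, by omega⟩, .inr ⟨e + 1, by omega⟩,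
      ⟨e + 1, Or.inr rfl, pathIndex_succ he⟩, ⟨e + 1, Or.inl rfl, pathIndex_succ he⟩, ?_⟩
    rw [extendLabel, Sum.elim_inr, Sum.elim_inr, Ne,
      (pathIndex_injOn hab).image_eq_image_iff (pair_subset_Iic _) (pair_subset_Iic _)]
    intro h
    have he' : e.val ∈ ({e.val + 1, e.val + 1 + 1} : Set ℕ) := h ▸ Set.mem_insert _ _
    simp only [Set.mem_insert_iff, Set.mem_singleton_iff] at he'
    omega

def extend (hab : Disjoint (L.star a) (L.star b)) (hl : 2 ≤ l) :
    CliqueLabelling (joinPath G (L.star a) (L.star b) l) (ι ⊕ Fin (l - 1)) where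
  label := L.extendLabel a b l
  ncard_label := L.ncard_extendLabel (L.ne_of_disjoint_star hab)
  adj_iff := L.extendLabel_adj_iff hab
  tripleHelly := L.tripleHelly_extendLabel hab hl
  exists_label_ne := L.exists_extendLabel_ne (L.ne_of_disjoint_star hab)

def map {W : Type} {H : SimpleGraph W} (e : G ≃g H) : CliqueLabelling H ι where
  label := L.label ∘ e.symm
  ncard_label w := L.ncard_label (e.symm w)
  adj_iff hvw := e.symm.map_adj_iff.symm.trans (L.adj_iff (e.symm.injective.ne hvw))
  tripleHelly := L.tripleHelly.comp e.symm
  exists_label_ne i := by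
    obtain ⟨v, w, hv, hw, hvw⟩ := L.exists_label_ne i
    exact ⟨e v, e w, by simpa using hv, by simpa using hw, by simpa using hvw⟩

end CliqueLabelling

theorem exists_cliqueLabelling_of_isGate {V : Type} {G : SimpleGraph V} (hG : IsGate G) :
    ∃ ι : Type, Nonempty ι ∧ Finite ι ∧ Nonempty (CliqueLabelling G ι) := by
  induction hG with
  | cycle n hn =>
    obtain ⟨m, rfl⟩ : ∃ m, n = m + 4 := ⟨n - 4, by omega⟩
    exact ⟨Fin (m + 4), inferInstance, inferInstance, ⟨cycleLabelling⟩⟩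
  | extend G C C' l _ hC hC' hdisj hl ih =>
    obtain ⟨ι, _, _, ⟨L⟩⟩ := ih
    obtain ⟨a, rfl⟩ := L.isMaxClique_iff.mp hC
    obtain ⟨b, rfl⟩ := L.isMaxClique_iff.mp hC'
    exact ⟨ι ⊕ Fin (l - 1), inferInstance, inferInstance, ⟨L.extend hdisj hl⟩⟩
  | iso G H _ e ih =>
    obtain ⟨ι, hne, hfin, ⟨L⟩⟩ := ih
    exact ⟨ι, hne, hfin, ⟨L.map e⟩⟩

theorem stmt4 {V : Type} (G : SimpleGraph V) (k : ℕ)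
    (hG : IsGate G) (hk : numMaxCliques G = k) :
    ∃ R : EPTRep G, R.Helly ∧ R.maxDegLE k ∧
      ∃ q : R.VT, {x : R.VT | x ≠ q}.ncard = k ∧ ∀ x : R.VT, x ≠ q → R.T.Adj q x := by
  obtain ⟨ι, _, _, ⟨L⟩⟩ := exists_cliqueLabelling_of_isGate hG
  obtain rfl : Nat.card ι = k := L.numMaxCliques_eq ▸ hk
  exact ⟨L.starRep, L.starRep_helly, L.starRep_maxDegLE, none,
    (Set.compl_singleton_eq none).symm ▸ ncard_compl_singleton_option none,
    fun _ hx => starGraph_center_adj hx.symm⟩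
end

section
/- Let v be a vertex of a gate G, and let C_1, C_2 be the two maximal cliques of G containing v (so C_1 ∩ C_2 = {v}). Let W:(w_1,...,w_t), t ≥ 2, be a chordless path vertex-disjoint from G. Then the graph obtained from the union of G − v and W by adding all edges between w_1 and the vertices of C_1 − {v} and all edges between w_t and the vertices of C_2 − {v} is a gate. -/
/-!
Induction on the construction of the gate `G`. If `G` is a cycle, or `v` lies on the path `P`
added last, the two maximal cliques at `v` are the two edges (or end cliques) at `v`, and
replacing `v` by a path on `t` vertices just lengthens the cycle, resp. `P`, by `t - 1`.
If `G = H + P` and `v = u` is a vertex of `H`, the maximal cliques of `G` at `u` come from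
maximal cliques `D₁, D₂` of `H`, and replacing `u` commutes with attaching `P`: the replacement
`W` of `u` in `H` is a gate by induction, and the cliques `C, C'` of `H` to which `P` is attached
lift to disjoint maximal cliques of `W`. This uses that `u` lies in no maximal clique of `H` other
than `D₁` and `D₂`, which is proved by a separate induction on gates.
-/

open SimpleGraph Set.Notation Sum

section MaxClique

variable {V W : Type} {G : SimpleGraph V} {H : SimpleGraph W} {K L R E F : Set V} {u v y : V}

theorem isMaxClique_iff_maximal : IsMaxClique G K ↔ Maximal G.IsClique K :=
  ⟨fun h => ⟨h.1, fun L hL hKL => (h.2 L hL hKL).ge⟩,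
    fun h => ⟨h.1, fun _ hL hKL => h.eq_of_subset hL hKL⟩⟩

theorem IsMaxClique.mem_of_forall_adj (hK : IsMaxClique G K)
    (h : ∀ x ∈ K, y ≠ x → G.Adj y x) : y ∈ K :=
  (isMaxClique_iff_maximal.1 hK).mem_of_prop_insert (hK.1.insert h)

theorem isMaxClique_of_forall_adj (hK : G.IsClique K)
    (h : ∀ y, (∀ x ∈ K, y ≠ x → G.Adj y x) → y ∈ K) : IsMaxClique G K :=
  ⟨hK, fun _ hL hKL => hKL.antisymm fun y hy => h y fun _ hx hyx => hL hy (hKL hx) hyx⟩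

theorem IsMaxClique.nonempty [Nonempty V] (hK : IsMaxClique G K) : K.Nonempty := by
  obtain ⟨x⟩ := ‹Nonempty V›
  rcases K.eq_empty_or_nonempty with rfl | hne
  · exact ⟨x, hK.mem_of_forall_adj fun _ h => h.elim⟩
  · exact hne

theorem IsMaxClique.eq_or_eq_of_mem (hK : IsMaxClique G K) (hvK : v ∈ K)
    (hL : G.IsClique L) (hR : G.IsClique R) (hvL : v ∈ L) (hadj : ∀ x, G.Adj v x → x ∈ L ∪ R)
    (hLR : ∀ x ∈ L, x ∉ R → ∀ y ∈ R, y ∉ L → ¬ G.Adj x y) : K = L ∨ K = R := by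
  have hKLR : K ⊆ L ∪ R := by
    intro x hx
    obtain rfl | hxv := eq_or_ne x v
    · exact Or.inl hvL
    · exact hadj x (hK.1 hvK hx hxv.symm)
  by_contra! h
  obtain ⟨x, hxK, hxL⟩ := Set.not_subset.1 fun hKL => h.1 (hK.2 L hL hKL)
  obtain ⟨y, hyK, hyR⟩ := Set.not_subset.1 fun hKR => h.2 (hK.2 R hR hKR)
  have hxR := (hKLR hxK).resolve_left hxL
  have hyL := (hKLR hyK).resolve_right hyR
  exact hLR y hyL hyR x hxR hxL (hK.1 hyK hxK (by rintro rfl; exact hxL hyL))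

theorem IsMaxClique.comap (e : G ≃g H) {K : Set W} (hK : IsMaxClique H K) :
    IsMaxClique G (e ⁻¹' K) :=
  isMaxClique_of_forall_adj
    (fun _ hx _ hy hxy => e.map_adj_iff.1 (hK.1 hx hy (e.injective.ne hxy)))
    fun y h => hK.mem_of_forall_adj fun x hx hyx => by
      simpa using e.map_adj_iff.2 (h (e.symm x) (by simpa using hx) (by rintro rfl; simp at hyx))

theorem IsMaxClique.induce_ne (hK : IsMaxClique G K) (hu : u ∉ K) :
    IsMaxClique (G.induce {x | x ≠ u}) ({x | x ≠ u} ↓∩ K) :=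
  isMaxClique_of_forall_adj (fun _ hx _ hy hxy => hK.1 hx hy (Subtype.coe_injective.ne hxy))
    fun y h => hK.mem_of_forall_adj fun x hx hyx =>
      h ⟨x, fun hxu => hu (hxu ▸ hx)⟩ hx (by rintro rfl; exact hyx rfl)

theorem IsMaxClique.eq_of_preimage_val_eq (hE : IsMaxClique G E) (hF : IsMaxClique G F)
    (h : {x | x ≠ u} ↓∩ E = {x | x ≠ u} ↓∩ F) : E = F := by
  have hsub {E F : Set V} (hEF : {x | x ≠ u} ↓∩ E ⊆ {x | x ≠ u} ↓∩ F) (hu : u ∈ E → u ∈ F) :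
      E ⊆ F := by
    intro x hx
    obtain rfl | hxu := eq_or_ne x u
    · exact hu hx
    · exact hEF (a := ⟨x, hxu⟩) hx
  by_cases huF : u ∈ F
  · exact hE.2 F hF.1 (hsub h.le fun _ => huF)
  · exact (hF.2 E hE.1 (hsub h.ge fun h => absurd h huF)).symm

theorem IsMaxClique.nonempty_preimage_val (hE : IsMaxClique G E) (hF : G.IsClique F) (hu : u ∈ F)
    (hne : E ≠ F) : ({x | x ≠ u} ↓∩ E).Nonempty := by
  by_contra h
  refine hne (hE.2 F hF fun x hx => ?_)
  obtain rfl | hxu := eq_or_ne x u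
  · exact hu
  · exact (h ⟨⟨x, hxu⟩, hx⟩).elim

end MaxClique

section JoinPath

variable {V : Type} {H : SimpleGraph V} {A B E : Set V} {l : ℕ}

@[simp] theorem joinPath_adj_inl_inl {a b : V} :
    (joinPath H A B l).Adj (inl a) (inl b) ↔ H.Adj a b := Iff.rfl

@[simp] theorem joinPath_adj_inl_inr {a : V} {i : Fin l} :
    (joinPath H A B l).Adj (inl a) (inr i) ↔ (i.val = 0 ∧ a ∈ A) ∨ (i.val = l - 1 ∧ a ∈ B) :=
  Iff.rfl

@[simp] theorem joinPath_adj_inr_inl {a : V} {i : Fin l} :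
    (joinPath H A B l).Adj (inr i) (inl a) ↔ (i.val = 0 ∧ a ∈ A) ∨ (i.val = l - 1 ∧ a ∈ B) :=
  Iff.rfl

@[simp] theorem joinPath_adj_inr_inr {i j : Fin l} :
    (joinPath H A B l).Adj (inr i) (inr j) ↔ i.val + 1 = j.val ∨ j.val + 1 = i.val := Iff.rfl

def liftClique (A B : Set V) (l : ℕ) (E : Set V) : Set (V ⊕ Fin l) :=
  {x | match x with
    | inl a => a ∈ E
    | inr j => (j.val = 0 ∧ E = A) ∨ (j.val = l - 1 ∧ E = B)}

@[simp] theorem mem_liftClique_inl {a : V} : inl a ∈ liftClique A B l E ↔ a ∈ E := Iff.rfl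

@[simp] theorem mem_liftClique_inr {j : Fin l} :
    inr j ∈ liftClique A B l E ↔ (j.val = 0 ∧ E = A) ∨ (j.val = l - 1 ∧ E = B) := Iff.rfl

def pathCliqueLeft (A : Set V) {l : ℕ} (i : Fin l) : Set (V ⊕ Fin l) :=
  {x | match x with
    | inl a => i.val = 0 ∧ a ∈ A
    | inr j => j = i ∨ j.val + 1 = i.val}

def pathCliqueRight (B : Set V) {l : ℕ} (i : Fin l) : Set (V ⊕ Fin l) :=
  {x | match x with
    | inl b => i.val = l - 1 ∧ b ∈ B
    | inr j => j = i ∨ i.val + 1 = j.val}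

@[simp] theorem mem_pathCliqueLeft_inl {a : V} {i : Fin l} :
    inl a ∈ pathCliqueLeft A i ↔ i.val = 0 ∧ a ∈ A := Iff.rfl

@[simp] theorem mem_pathCliqueLeft_inr {i j : Fin l} :
    (inr j : V ⊕ Fin l) ∈ pathCliqueLeft A i ↔ j = i ∨ j.val + 1 = i.val := Iff.rfl

@[simp] theorem mem_pathCliqueRight_inl {b : V} {i : Fin l} :
    inl b ∈ pathCliqueRight B i ↔ i.val = l - 1 ∧ b ∈ B := Iff.rfl

@[simp] theorem mem_pathCliqueRight_inr {i j : Fin l} :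
    (inr j : V ⊕ Fin l) ∈ pathCliqueRight B i ↔ j = i ∨ i.val + 1 = j.val := Iff.rfl

def joinPathSwap (H : SimpleGraph V) (A B : Set V) (l : ℕ) :
    joinPath H A B l ≃g joinPath H B A l where
  toEquiv := Equiv.sumCongr (Equiv.refl V) Fin.revPerm
  map_rel_iff' {a b} := by
    rcases a with a | i <;> rcases b with b | j <;>
      simp only [Equiv.sumCongr_apply, Sum.map_inl, Sum.map_inr, Equiv.refl_apply,
        Fin.revPerm_apply, joinPath_adj_inl_inl, joinPath_adj_inl_inr, joinPath_adj_inr_inl,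
        joinPath_adj_inr_inr, Fin.val_rev]
    all_goals first
      | omega
      | exact or_comm.trans (Iff.or (and_congr_left' (by omega)) (and_congr_left' (by omega)))

theorem joinPathSwap_preimage_liftClique :
    joinPathSwap H A B l ⁻¹' liftClique B A l E = liftClique A B l E := by
  ext (a | j)
  · rfl
  · simp only [Set.mem_preimage, joinPathSwap, RelIso.coe_fn_mk, Equiv.sumCongr_apply,
      Sum.map_inr, Fin.revPerm_apply, mem_liftClique_inr, Fin.val_rev]
    exact or_comm.trans (Iff.or (and_congr_left' (by omega)) (and_congr_left' (by omega)))

theorem isClique_pathCliqueLeft (hA : H.IsClique A) (i : Fin l) :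
    (joinPath H A B l).IsClique (pathCliqueLeft A i) := by
  rintro (a | j) ha (b | k) hb hne <;>
    simp only [mem_pathCliqueLeft_inl, mem_pathCliqueLeft_inr, joinPath_adj_inl_inl,
      joinPath_adj_inl_inr, joinPath_adj_inr_inl, joinPath_adj_inr_inr, Fin.ext_iff, ne_eq,
      inl.injEq, inr.injEq] at ha hb hne ⊢
  · exact hA ha.2 hb.2 hne
  · exact Or.inl ⟨by omega, ha.2⟩
  · exact Or.inl ⟨by omega, hb.2⟩
  · omega

theorem isClique_pathCliqueRight (hB : H.IsClique B) (i : Fin l) :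
    (joinPath H A B l).IsClique (pathCliqueRight B i) := by
  rintro (a | j) ha (b | k) hb hne <;>
    simp only [mem_pathCliqueRight_inl, mem_pathCliqueRight_inr, joinPath_adj_inl_inl,
      joinPath_adj_inl_inr, joinPath_adj_inr_inl, joinPath_adj_inr_inr, Fin.ext_iff, ne_eq,
      inl.injEq, inr.injEq] at ha hb hne ⊢
  · exact hB ha.2 hb.2 hne
  · exact Or.inr ⟨by omega, ha.2⟩
  · exact Or.inr ⟨by omega, hb.2⟩
  · omega

theorem IsMaxClique.eq_pathCliqueLeft_or_eq_pathCliqueRight {K : Set (V ⊕ Fin l)}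
    (hK : IsMaxClique (joinPath H A B l) K) (hl : 2 ≤ l) (hA : H.IsClique A) (hB : H.IsClique B)
    (hAB : Disjoint A B) {i : Fin l} (hi : inr i ∈ K) :
    K = pathCliqueLeft A i ∨ K = pathCliqueRight B i := by
  refine hK.eq_or_eq_of_mem hi (isClique_pathCliqueLeft hA i) (isClique_pathCliqueRight hB i)
    (by simp) ?_ ?_
  · rintro (a | j) h <;>
      simp only [Set.mem_union, mem_pathCliqueLeft_inl, mem_pathCliqueLeft_inr,
        mem_pathCliqueRight_inl, mem_pathCliqueRight_inr, joinPath_adj_inr_inl,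
        joinPath_adj_inr_inr, Fin.ext_iff] at h ⊢ <;>
      omega
  · rintro (a | j) hx hxR (b | k) hy hyL hadj <;>
      simp only [mem_pathCliqueLeft_inl, mem_pathCliqueLeft_inr, mem_pathCliqueRight_inl,
        mem_pathCliqueRight_inr, joinPath_adj_inl_inl, joinPath_adj_inl_inr, joinPath_adj_inr_inl,
        joinPath_adj_inr_inr, Fin.ext_iff] at hx hxR hy hyL hadj
    all_goals first
      | omega
      | rcases hadj with ⟨h1, h2⟩ | ⟨h1, h2⟩ <;>
          first | omega | exact Set.disjoint_left.1 hAB (by tauto) (by tauto)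

theorem liftClique_self_left (hAB : A ≠ B) {i : Fin l} (hi : i.val = 0) :
    liftClique A B l A = pathCliqueLeft A i := by
  ext (a | j) <;> simp [hAB, hi, Fin.ext_iff]

theorem liftClique_self_right (hAB : A ≠ B) {i : Fin l} (hi : i.val = l - 1) :
    liftClique A B l B = pathCliqueRight B i := by
  ext (a | j)
  · simp [hi]
  · simp only [mem_liftClique_inr, mem_pathCliqueRight_inr, hAB.symm, and_false, and_true,
      false_or, hi, Fin.ext_iff]
    omega

theorem isMaxClique_liftClique_self_left (hl : 2 ≤ l) (hA : H.IsClique A) (hAne : A.Nonempty)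
    (hAB : Disjoint A B) : IsMaxClique (joinPath H A B l) (liftClique A B l A) := by
  rw [liftClique_self_left (hAB.ne hAne.ne_empty) (i := ⟨0, by omega⟩) rfl]
  refine isMaxClique_of_forall_adj (isClique_pathCliqueLeft hA _) ?_
  rintro (a | j) h
  · have := h (inr ⟨0, by omega⟩) (Or.inl rfl) (by simp)
    simp only [joinPath_adj_inl_inr] at this
    exact ⟨rfl, by rcases this with ⟨-, ha⟩ | ⟨h0, -⟩; exacts [ha, by omega]⟩
  · by_cases hj : j.val = 0
    · exact Or.inl (Fin.ext hj)
    obtain ⟨a, ha⟩ := hAne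
    have := h (inl a) ⟨rfl, ha⟩ (by simp)
    simp only [joinPath_adj_inr_inl] at this
    rcases this with ⟨h0, -⟩ | ⟨-, hb⟩
    · exact absurd h0 hj
    · exact absurd hb (Set.disjoint_left.1 hAB ha)

theorem isMaxClique_liftClique_self_right (hl : 2 ≤ l) (hB : H.IsClique B) (hBne : B.Nonempty)
    (hAB : Disjoint A B) : IsMaxClique (joinPath H A B l) (liftClique A B l B) := by
  simpa only [joinPathSwap_preimage_liftClique] using
    (isMaxClique_liftClique_self_left hl hB hBne hAB.symm).comap (joinPathSwap H A B l)

theorem isMaxClique_liftClique (hE : IsMaxClique H E) (hEne : E.Nonempty) (hA : H.IsClique A)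
    (hB : H.IsClique B) (hAB : A ≠ B) (hl : 2 ≤ l) :
    IsMaxClique (joinPath H A B l) (liftClique A B l E) := by
  refine isMaxClique_of_forall_adj ?_ ?_
  · rintro (a | j) ha (b | k) hb hne <;>
      simp only [mem_liftClique_inl, mem_liftClique_inr, joinPath_adj_inl_inl,
        joinPath_adj_inl_inr, joinPath_adj_inr_inl, joinPath_adj_inr_inr, ne_eq, inl.injEq,
        inr.injEq, Fin.ext_iff] at ha hb hne ⊢
    · exact hE.1 ha hb hne
    · rcases hb with ⟨h, rfl⟩ | ⟨h, rfl⟩ <;> tauto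
    · rcases ha with ⟨h, rfl⟩ | ⟨h, rfl⟩ <;> tauto
    · rcases ha with ⟨h, rfl⟩ | ⟨h, rfl⟩ <;> rcases hb with ⟨h', h''⟩ | ⟨h', h''⟩ <;>
        first | omega | exact absurd h'' (by tauto)
  · rintro (a | j) h
    · exact hE.mem_of_forall_adj fun x hx hax => h (inl x) hx (by simpa using hax)
    · obtain ⟨x₀, hx₀⟩ := hEne
      have hadj : ∀ x ∈ E, (j.val = 0 ∧ x ∈ A) ∨ (j.val = l - 1 ∧ x ∈ B) :=
        fun x hx => h (inl x) hx (by simp)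
      rcases hadj x₀ hx₀ with ⟨h0, -⟩ | ⟨h1, -⟩
      · refine Or.inl ⟨h0, hE.2 A hA fun x hx => ?_⟩
        rcases hadj x hx with ⟨-, hxA⟩ | ⟨h1, -⟩
        exacts [hxA, by omega]
      · refine Or.inr ⟨h1, hE.2 B hB fun x hx => ?_⟩
        rcases hadj x hx with ⟨h0, -⟩ | ⟨-, hxB⟩
        exacts [by omega, hxB]

theorem IsMaxClique.exists_eq_liftClique {K : Set (V ⊕ Fin l)}
    (hK : IsMaxClique (joinPath H A B l) K) (hl : 2 ≤ l) (hA : IsMaxClique H A)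
    (hB : IsMaxClique H B) (hAB : Disjoint A B) {x : V} (hx : inl x ∈ K) :
    ∃ D, IsMaxClique H D ∧ x ∈ D ∧ K = liftClique A B l D := by
  have hAB' : A ≠ B := haveI : Nonempty V := ⟨x⟩; hAB.ne hA.nonempty.ne_empty
  by_cases hpath : ∃ j, inr j ∈ K
  · obtain ⟨j, hj⟩ := hpath
    rcases hK.eq_pathCliqueLeft_or_eq_pathCliqueRight hl hA.1 hB.1 hAB hj with rfl | rfl
    · exact ⟨A, hA, hx.2, (liftClique_self_left hAB' hx.1).symm⟩
    · exact ⟨B, hB, hx.2, (liftClique_self_right hAB' hx.1).symm⟩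
  · simp only [not_exists] at hpath
    have hD : IsMaxClique H {y | inl y ∈ K} := by
      refine isMaxClique_of_forall_adj (fun a ha b hb hab => hK.1 ha hb (by simpa using hab))
        fun y h => hK.mem_of_forall_adj ?_
      rintro (b | j) hb hyb
      exacts [h b hb (by simpa using hyb), absurd hb (hpath j)]
    refine ⟨_, hD, hx, hK.2 _ (isMaxClique_liftClique hD ⟨x, hx⟩ hA.1 hB.1 hAB' hl).1 ?_⟩
    rintro (b | j) hb
    exacts [hb, absurd hb (hpath j)]

theorem disjoint_liftClique {E' : Set V} (hl : 2 ≤ l) (hE : Disjoint E E') (hne : E ≠ E') :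
    Disjoint (liftClique A B l E) (liftClique A B l E') := by
  refine Set.disjoint_left.2 ?_
  rintro (a | j) h h'
  · exact Set.disjoint_left.1 hE h h'
  · simp only [mem_liftClique_inr] at h h'
    rcases h with ⟨h, rfl⟩ | ⟨h, rfl⟩ <;> rcases h' with ⟨h', rfl⟩ | ⟨h', rfl⟩ <;>
      first | omega | exact hne rfl

end JoinPath

section Cycle

theorem cycleGraph_adj_iff_val {n : ℕ} (hn : 2 ≤ n) {u v : Fin n} :
    (cycleGraph n).Adj u v ↔ u.val + 1 = v.val ∨ v.val + 1 = u.val ∨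
      (u.val = 0 ∧ v.val + 1 = n) ∨ (v.val = 0 ∧ u.val + 1 = n) := by
  have hsub (a b : Fin n) :
      (a - b).val = if b.val ≤ a.val then a.val - b.val else n + a.val - b.val := by
    split_ifs with h
    · exact Fin.coe_sub_iff_le.2 h
    · exact Fin.coe_sub_iff_lt.2 (not_le.1 h)
  rw [cycleGraph_adj', hsub, hsub]
  have := u.isLt
  have := v.isLt
  split_ifs <;> omega

theorem IsMaxClique.eq_or_eq_of_zero_mem_cycleGraph {m : ℕ} {K : Set (Fin (m + 4))}
    (hK : IsMaxClique (cycleGraph (m + 4)) K) (h0 : 0 ∈ K) : K = {-1, 0} ∨ K = {0, 1} := by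
  have hadj (u v : Fin (m + 4)) := cycleGraph_adj_iff_val (by omega : 2 ≤ m + 4) (u := u) (v := v)
  refine hK.eq_or_eq_of_mem h0 (isClique_pair.2 fun _ => ?_) (isClique_pair.2 fun _ => ?_)
    (by simp) ?_ ?_
  · simp [hadj, Fin.coe_neg_one]
  · simp [hadj]
  · intro x hx
    rw [← mem_neighborSet, cycleGraph_neighborSet] at hx
    simp only [zero_sub, zero_add, Set.mem_insert_iff, Set.mem_singleton_iff] at hx
    simp only [Set.mem_union, Set.mem_insert_iff, Set.mem_singleton_iff]
    tauto
  · have hno : ¬ (cycleGraph (m + 4)).Adj (-1) 1 := by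
      rw [hadj, Fin.coe_neg_one, Fin.val_one]
      omega
    simp only [Set.mem_insert_iff, Set.mem_singleton_iff]
    rintro x (rfl | rfl) hx y (rfl | rfl) hy <;> first | exact hno | simp at hx hy

def cycleGraphRotate (n : ℕ) [NeZero n] (c : Fin n) : cycleGraph n ≃g cycleGraph n where
  toEquiv := Equiv.addRight c
  map_rel_iff' := by simp [cycleGraph_adj']

theorem IsMaxClique.preimage_cycleGraphRotate_eq_or_eq {m : ℕ} {K : Set (Fin (m + 4))}
    (hK : IsMaxClique (cycleGraph (m + 4)) K) {v : Fin (m + 4)} (hv : v ∈ K) :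
    cycleGraphRotate _ v ⁻¹' K = {-1, 0} ∨ cycleGraphRotate _ v ⁻¹' K = {0, 1} :=
  (hK.comap _).eq_or_eq_of_zero_mem_cycleGraph (by simpa [cycleGraphRotate] using hv)

end Cycle

section ReplaceVertex

variable {V W : Type}

abbrev replaceVertex (G : SimpleGraph V) (v : V) (A B : Set V) (t : ℕ) :
    SimpleGraph ({x | x ≠ v} ⊕ Fin t) :=
  joinPath (G.induce {x | x ≠ v}) ({x | x ≠ v} ↓∩ A) ({x | x ≠ v} ↓∩ B) t

def replaceVertexCongr {G : SimpleGraph V} {H : SimpleGraph W} (e : G ≃g H) {v : V} {w : W}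
    (hvw : e v = w) (A B : Set W) (t : ℕ) :
    replaceVertex G v (e ⁻¹' A) (e ⁻¹' B) t ≃g replaceVertex H w A B t where
  toEquiv := Equiv.sumCongr (e.toEquiv.subtypeEquiv fun _ => hvw ▸ e.injective.ne_iff.symm)
    (Equiv.refl _)
  map_rel_iff' {a b} := by
    rcases a with a | i <;> rcases b with b | j <;> simp [Equiv.subtypeEquiv, e.map_adj_iff]

-- Position `j < t` of the long cycle is the new path vertex `j`, position `t + k` is the old
-- vertex `k + 1`.
def cycleGraphIsoReplaceVertexZero (m t : ℕ) (ht : 1 ≤ t) :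
    cycleGraph (t + (m + 3)) ≃g replaceVertex (cycleGraph (m + 4)) 0 {-1, 0} {0, 1} t where
  toEquiv := finSumFinEquiv.symm.trans
    ((Equiv.sumCongr (Equiv.refl _) (finSuccAboveEquiv 0)).trans (Equiv.sumComm _ _))
  map_rel_iff' {a b} := by
    induction a using Fin.addCases <;> induction b using Fin.addCases <;>
      simp only [Equiv.trans_apply, finSumFinEquiv_symm_apply_castAdd,
        finSumFinEquiv_symm_apply_natAdd, Equiv.sumCongr_apply, Sum.map_inl, Sum.map_inr,
        Equiv.sumComm_apply, Sum.swap_inl, Sum.swap_inr, Equiv.refl_apply,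
        finSuccAboveEquiv_apply, Fin.succAbove_zero, joinPath_adj_inr_inr, joinPath_adj_inr_inl,
        joinPath_adj_inl_inr, joinPath_adj_inl_inl, induce_adj, Set.mem_preimage,
        Set.mem_insert_iff, Set.mem_singleton_iff, cycleGraph_adj_iff_val (by omega : 2 ≤ m + 4),
        cycleGraph_adj_iff_val (by omega : 2 ≤ t + (m + 3)), Fin.ext_iff, Fin.val_succ,
        Fin.coe_neg_one, Fin.val_zero, Fin.val_one, Fin.val_castAdd, Fin.val_natAdd] <;>
      omega

def joinPathIsoReplaceVertexInr (G : SimpleGraph V) (A B : Set V) {l : ℕ} (i : Fin l) {t : ℕ}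
    (ht : 1 ≤ t) :
    joinPath G A B (l + t - 1) ≃g
      replaceVertex (joinPath G A B l) (inr i) (pathCliqueLeft A i) (pathCliqueRight B i) t where
  toFun
    | inl a => inl ⟨inl a, inl_ne_inr⟩
    | inr k =>
      if hk : k.val < i.val then
        inl ⟨inr ⟨k, by omega⟩, inr_injective.ne (Fin.ne_of_val_ne (show k.val ≠ i by omega))⟩
      else if hk' : k.val < i.val + t then inr ⟨k - i, by omega⟩
      else inl ⟨inr ⟨k + 1 - t, by omega⟩,
        inr_injective.ne (Fin.ne_of_val_ne (show k.val + 1 - t ≠ i by omega))⟩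
  invFun
    | inl ⟨inl a, _⟩ => inl a
    | inl ⟨inr j, _⟩ => inr (if j.val < i.val then ⟨j, by omega⟩ else ⟨j + t - 1, by omega⟩)
    | inr k => inr ⟨i + k, by omega⟩
  left_inv := by
    rintro (a | k)
    · rfl
    · by_cases hk : k.val < i.val
      · simp [hk]
      by_cases hk' : k.val < i.val + t
      · simp only [hk, ↓reduceDIte, hk', inr.injEq, Fin.ext_iff]
        omega
      · simp only [hk, ↓reduceDIte, hk', Set.mem_ofPred_eq,
          show ¬k.val + 1 - t < i.val by omega, ↓reduceIte, inr.injEq, Fin.ext_iff]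
        omega
  right_inv := by
    rintro (⟨a | j, h⟩ | k)
    · rfl
    · have hji : j.val ≠ i.val := fun hji => h (congrArg inr (Fin.ext hji))
      by_cases hj : j.val < i.val
      · simp [hj]
      · simp only [hj, ↓reduceIte, show ¬j.val + t - 1 < i.val by omega, ↓reduceDIte,
          show ¬j.val + t - 1 < i.val + t by omega, Set.mem_ofPred_eq, inl.injEq,
          Subtype.mk.injEq, inr.injEq, Fin.ext_iff]
        omega
    · simp
  map_rel_iff' {a b} := by
    rcases a with a | k <;> rcases b with b | k' <;> dsimp only [Equiv.coe_fn_mk] <;>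
      (try split_ifs) <;>
      simp only [joinPath_adj_inl_inl, joinPath_adj_inl_inr, joinPath_adj_inr_inl,
        joinPath_adj_inr_inr, induce_adj, Set.mem_preimage, mem_pathCliqueLeft_inl,
        mem_pathCliqueLeft_inr, mem_pathCliqueRight_inl, mem_pathCliqueRight_inr, Fin.ext_iff,
        ← and_assoc]
    all_goals first
      | omega
      | exact Iff.or (and_congr_left' (by omega)) (and_congr_left' (by omega))

-- `liftClique` attaches the path ends by comparing cliques, so restricting to `G - u` must not
-- identify any two of the cliques involved.
def joinPathReplaceVertexComm (G : SimpleGraph V) (u : V) {C C' D₁ D₂ : Set V} {l t : ℕ}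
    (hinj : Set.InjOn (fun E : Set V => {x | x ≠ u} ↓∩ E) {C, C', D₁, D₂}) :
    joinPath (replaceVertex G u D₁ D₂ t)
        (liftClique ({x | x ≠ u} ↓∩ D₁) ({x | x ≠ u} ↓∩ D₂) t ({x | x ≠ u} ↓∩ C))
        (liftClique ({x | x ≠ u} ↓∩ D₁) ({x | x ≠ u} ↓∩ D₂) t ({x | x ≠ u} ↓∩ C')) l ≃g
      replaceVertex (joinPath G C C' l) (inl u) (liftClique C C' l D₁)
        (liftClique C C' l D₂) t where
  toFun
    | inl (inl x) => inl ⟨inl x, fun h => x.2 (inl_injective h)⟩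
    | inl (inr k) => inr k
    | inr j => inl ⟨inr j, inr_ne_inl⟩
  invFun
    | inl ⟨inl x, hx⟩ => inl (inl ⟨x, fun h => hx (congrArg inl h)⟩)
    | inl ⟨inr j, _⟩ => inr j
    | inr k => inl (inr k)
  left_inv := by rintro ((x | k) | j) <;> rfl
  right_inv := by rintro (⟨x | j, hx⟩ | k) <;> rfl
  map_rel_iff' {a b} := by
    rcases a with (x | k) | j <;> rcases b with (y | k') | j' <;>
      simp only [Equiv.coe_fn_mk, joinPath_adj_inl_inl, joinPath_adj_inl_inr,
        joinPath_adj_inr_inl, joinPath_adj_inr_inr, induce_adj, Set.mem_preimage,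
        mem_liftClique_inl, mem_liftClique_inr,
        hinj.eq_iff (by simp : C ∈ _) (by simp : D₁ ∈ _),
        hinj.eq_iff (by simp : C ∈ _) (by simp : D₂ ∈ _),
        hinj.eq_iff (by simp : C' ∈ _) (by simp : D₁ ∈ _),
        hinj.eq_iff (by simp : C' ∈ _) (by simp : D₂ ∈ _)]
    all_goals
      rw [eq_comm (a := D₁), eq_comm (a := D₁), eq_comm (a := D₂), eq_comm (a := D₂)]
      tauto

end ReplaceVertex

section Gate

variable {V : Type}

theorem IsGate.nonempty {G : SimpleGraph V} (hG : IsGate G) : Nonempty V := by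
  induction hG with
  | cycle n hn => exact ⟨⟨0, by omega⟩⟩
  | extend _ _ _ l _ _ _ _ hl => exact ⟨inr ⟨0, by omega⟩⟩
  | iso _ _ _ e ih => exact ⟨e ih.some⟩

theorem IsGate.eq_or_eq_of_mem {G : SimpleGraph V} (hG : IsGate G) {v : V} {K₁ K₂ K : Set V}
    (h₁ : IsMaxClique G K₁) (h₂ : IsMaxClique G K₂) (h : IsMaxClique G K) (hne : K₁ ≠ K₂)
    (hv₁ : v ∈ K₁) (hv₂ : v ∈ K₂) (hv : v ∈ K) : K = K₁ ∨ K = K₂ := by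
  induction hG with
  | cycle n hn =>
    obtain ⟨m, rfl⟩ : ∃ m, n = m + 4 := ⟨n - 4, by omega⟩
    have inj := Set.preimage_injective.2 (cycleGraphRotate _ v).surjective
    rcases h₁.preimage_cycleGraphRotate_eq_or_eq hv₁ with e₁ | e₁ <;>
      rcases h₂.preimage_cycleGraphRotate_eq_or_eq hv₂ with e₂ | e₂ <;>
      rcases h.preimage_cycleGraphRotate_eq_or_eq hv with e₃ | e₃
    all_goals first
      | exact absurd (inj (e₁.trans e₂.symm)) hne
      | exact Or.inl (inj (e₃.trans e₁.symm))
      | exact Or.inr (inj (e₃.trans e₂.symm))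
  | extend G C C' l _ hC hC' hdisj hl ih =>
    rcases v with x | i
    · obtain ⟨D₁, hD₁, hx₁, rfl⟩ := h₁.exists_eq_liftClique hl hC hC' hdisj hv₁
      obtain ⟨D₂, hD₂, hx₂, rfl⟩ := h₂.exists_eq_liftClique hl hC hC' hdisj hv₂
      obtain ⟨D, hD, hx, rfl⟩ := h.exists_eq_liftClique hl hC hC' hdisj hv
      exact (ih hD₁ hD₂ hD (fun h => hne (h ▸ rfl)) hx₁ hx₂ hx).imp (congrArg _) (congrArg _)
    · have hcl {K} (hK : IsMaxClique (joinPath G C C' l) K) (hi : inr i ∈ K) :=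
        hK.eq_pathCliqueLeft_or_eq_pathCliqueRight hl hC.1 hC'.1 hdisj hi
      rcases hcl h₁ hv₁ with rfl | rfl <;> rcases hcl h₂ hv₂ with rfl | rfl <;>
        rcases hcl h hv with rfl | rfl <;> simp_all
  | iso _ _ _ e ih =>
    have inj := Set.preimage_injective.2 e.surjective
    exact (ih (h₁.comap e) (h₂.comap e) (h.comap e) (fun h => hne (inj h)) (v := e.symm v)
      (by simpa using hv₁) (by simpa using hv₂) (by simpa using hv)).imp
        (fun h => inj h) (fun h => inj h)

theorem isGate_replaceVertex_of_eq_or_eq {G : SimpleGraph V} {v : V} {L R C₁ C₂ : Set V} {t : ℕ}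
    (hLR : IsGate (replaceVertex G v L R t)) (h₁ : C₁ = L ∨ C₁ = R) (h₂ : C₂ = L ∨ C₂ = R)
    (hne : C₁ ≠ C₂) : IsGate (replaceVertex G v C₁ C₂ t) := by
  rcases h₁ with rfl | rfl <;> rcases h₂ with rfl | rfl
  · exact absurd rfl hne
  · exact hLR
  · exact IsGate.iso _ _ hLR (joinPathSwap _ _ _ t)
  · exact absurd rfl hne

theorem isGate_replaceVertex_cycleGraph {n : ℕ} (hn : 4 ≤ n) {v : Fin n} {C₁ C₂ : Set (Fin n)}
    (h₁ : IsMaxClique (cycleGraph n) C₁) (h₂ : IsMaxClique (cycleGraph n) C₂)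
    (hv₁ : v ∈ C₁) (hv₂ : v ∈ C₂) (hne : C₁ ≠ C₂) {t : ℕ} (ht : 1 ≤ t) :
    IsGate (replaceVertex (cycleGraph n) v C₁ C₂ t) := by
  obtain ⟨m, rfl⟩ : ∃ m, n = m + 4 := ⟨n - 4, by omega⟩
  have inj := Set.preimage_injective.2 (cycleGraphRotate _ v).surjective
  refine IsGate.iso _ _ ?_
    (replaceVertexCongr (cycleGraphRotate _ v) (v := 0) (by simp [cycleGraphRotate]) C₁ C₂ t)
  refine isGate_replaceVertex_of_eq_or_eq ?_ (h₁.preimage_cycleGraphRotate_eq_or_eq hv₁)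
    (h₂.preimage_cycleGraphRotate_eq_or_eq hv₂) fun h => hne (inj h)
  exact IsGate.iso _ _ (IsGate.cycle _ (by omega)) (cycleGraphIsoReplaceVertexZero m t ht)

theorem isGate_replaceVertex_joinPath_inr {G : SimpleGraph V} (hG : IsGate G) {C C' : Set V}
    (hC : IsMaxClique G C) (hC' : IsMaxClique G C') (hdisj : Disjoint C C') {l : ℕ} (hl : 2 ≤ l)
    {i : Fin l} {C₁ C₂ : Set (V ⊕ Fin l)} (h₁ : IsMaxClique (joinPath G C C' l) C₁)
    (h₂ : IsMaxClique (joinPath G C C' l) C₂) (hv₁ : inr i ∈ C₁) (hv₂ : inr i ∈ C₂)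
    (hne : C₁ ≠ C₂) {t : ℕ} (ht : 1 ≤ t) :
    IsGate (replaceVertex (joinPath G C C' l) (inr i) C₁ C₂ t) :=
  isGate_replaceVertex_of_eq_or_eq
    (IsGate.iso _ _ (IsGate.extend G C C' (l + t - 1) hG hC hC' hdisj (by omega))
      (joinPathIsoReplaceVertexInr G C C' i ht))
    (h₁.eq_pathCliqueLeft_or_eq_pathCliqueRight hl hC.1 hC'.1 hdisj hv₁)
    (h₂.eq_pathCliqueLeft_or_eq_pathCliqueRight hl hC.1 hC'.1 hdisj hv₂) hne

theorem isMaxClique_liftClique_replaceVertex {G : SimpleGraph V} (hG : IsGate G) {u : V}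
    {D₁ D₂ E : Set V} (hD₁ : IsMaxClique G D₁) (hD₂ : IsMaxClique G D₂) (hu₁ : u ∈ D₁)
    (hu₂ : u ∈ D₂) (hD : D₁ ≠ D₂) (hint : D₁ ∩ D₂ = {u}) {t : ℕ} (ht : 2 ≤ t)
    (hE : IsMaxClique G E) :
    IsMaxClique (replaceVertex G u D₁ D₂ t)
      (liftClique ({x | x ≠ u} ↓∩ D₁) ({x | x ≠ u} ↓∩ D₂) t ({x | x ≠ u} ↓∩ E)) := by
  have hcl {D : Set V} (hD : G.IsClique D) :
      (G.induce {x | x ≠ u}).IsClique ({x | x ≠ u} ↓∩ D) :=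
    isClique_induce_iff.2 (hD.subset (Set.image_preimage_subset _ _))
  have hdisj : Disjoint ({x | x ≠ u} ↓∩ D₁) ({x | x ≠ u} ↓∩ D₂) :=
    Set.disjoint_left.2 fun x h₁ h₂ => x.2 (hint.subset ⟨h₁, h₂⟩)
  by_cases huE : u ∈ E
  · rcases hG.eq_or_eq_of_mem hD₁ hD₂ hE hD hu₁ hu₂ huE with rfl | rfl
    · exact isMaxClique_liftClique_self_left ht (hcl hD₁.1)
        (hE.nonempty_preimage_val hD₂.1 hu₂ hD) hdisj
    · exact isMaxClique_liftClique_self_right ht (hcl hD₂.1)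
        (hE.nonempty_preimage_val hD₁.1 hu₁ hD.symm) hdisj
  · exact isMaxClique_liftClique (hE.induce_ne huE)
      (hE.nonempty_preimage_val hD₁.1 hu₁ fun h => huE (h ▸ hu₁)) (hcl hD₁.1) (hcl hD₂.1)
      (hdisj.ne (hD₁.nonempty_preimage_val hD₂.1 hu₂ hD).ne_empty) ht

theorem isGate_replaceVertex_joinPath_inl {G : SimpleGraph V} (hG : IsGate G) {C C' : Set V}
    (hC : IsMaxClique G C) (hC' : IsMaxClique G C') (hdisj : Disjoint C C') {l : ℕ} (hl : 2 ≤ l)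
    {u : V} {D₁ D₂ : Set V} (hD₁ : IsMaxClique G D₁) (hD₂ : IsMaxClique G D₂) (hu₁ : u ∈ D₁)
    (hu₂ : u ∈ D₂) (hD : D₁ ≠ D₂) (hint : D₁ ∩ D₂ = {u}) {t : ℕ} (ht : 2 ≤ t)
    (hW : IsGate (replaceVertex G u D₁ D₂ t)) :
    IsGate (replaceVertex (joinPath G C C' l) (inl u) (liftClique C C' l D₁)
      (liftClique C C' l D₂) t) := by
  have hinj : Set.InjOn (fun E : Set V => {x | x ≠ u} ↓∩ E) {C, C', D₁, D₂} := by
    have hmax : ∀ E ∈ ({C, C', D₁, D₂} : Set (Set V)), IsMaxClique G E := by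
      rintro E (rfl | rfl | rfl | rfl) <;> assumption
    exact fun E hE F hF => (hmax E hE).eq_of_preimage_val_eq (hmax F hF)
  have hlift {E : Set V} (hE : IsMaxClique G E) :=
    isMaxClique_liftClique_replaceVertex hG hD₁ hD₂ hu₁ hu₂ hD hint ht hE
  have hCC' : C ≠ C' := haveI := hG.nonempty; hdisj.ne hC.nonempty.ne_empty
  refine IsGate.iso _ _ (IsGate.extend _ _ _ l hW (hlift hC) (hlift hC') ?_ hl)
    (joinPathReplaceVertexComm G u hinj)
  exact disjoint_liftClique ht (hdisj.preimage _) fun h => hCC' (hinj (by simp) (by simp) h)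

end Gate

theorem stmt5 {V : Type} (G : SimpleGraph V) (hG : IsGate G) (v : V)
    (C₁ C₂ : Set V) (h1 : IsMaxClique G C₁) (h2 : IsMaxClique G C₂)
    (hv1 : v ∈ C₁) (hv2 : v ∈ C₂) (hne : C₁ ≠ C₂) (hint : C₁ ∩ C₂ = {v})
    (t : ℕ) (ht : 2 ≤ t) :
    IsGate (joinPath (G.induce {u : V | u ≠ v})
      {u : {u : V | u ≠ v} | ↑u ∈ C₁} {u : {u : V | u ≠ v} | ↑u ∈ C₂} t) := by
  induction hG with
  | cycle n hn => exact isGate_replaceVertex_cycleGraph hn h1 h2 hv1 hv2 hne (by omega)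
  | extend G C C' l hG hC hC' hdisj hl ih =>
    rcases v with u | i
    · obtain ⟨D₁, hD₁, hu₁, rfl⟩ := h1.exists_eq_liftClique hl hC hC' hdisj hv1
      obtain ⟨D₂, hD₂, hu₂, rfl⟩ := h2.exists_eq_liftClique hl hC hC' hdisj hv2
      have hD : D₁ ≠ D₂ := fun h => hne (h ▸ rfl)
      have hDint : D₁ ∩ D₂ = {u} := Set.ext fun x => by simpa using Set.ext_iff.1 hint (inl x)
      exact isGate_replaceVertex_joinPath_inl hG hC hC' hdisj hl hD₁ hD₂ hu₁ hu₂ hD hDint ht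
        (ih u D₁ D₂ hD₁ hD₂ hu₁ hu₂ hD hDint)
    · exact isGate_replaceVertex_joinPath_inr hG hC hC' hdisj hl h1 h2 hv1 hv2 hne (by omega)
  | iso _ _ _ e ih =>
    have inj := Set.preimage_injective.2 e.surjective
    have hint' : e ⁻¹' C₁ ∩ e ⁻¹' C₂ = {e.symm v} := by
      rw [← Set.preimage_inter, hint]
      exact Set.ext fun x => e.eq_symm_apply.symm
    exact IsGate.iso _ _ (ih (e.symm v) _ _ (h1.comap e) (h2.comap e) (by simpa) (by simpa)
      (fun h => hne (inj h)) hint') (replaceVertexCongr e (by simp) C₁ C₂ t)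
end
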